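/- Let M be a model category, let x be an object, and let SCyl^•(x) be a special cylinder object for x. Then SCyl^•(x) is weakly terminal among cylinder objects for x: for any cylinder object Cyl^•(x), there exists a map of cosimplicial objects Cyl^•(x) → SCyl^•(x) commuting with the identifications of the 0-th objects with x. -/

import Mathlib

open CategoryTheory CategoryTheory.Limits

universe v u

/-- A class of morphisms is closed under retracts. -/
def RetractClosed {M : Type u} [Category.{v} M] (P : MorphismProperty M) : Prop :=
  ∀ ⦃a b c d : M⦄ (f : a ⟶ b) (g : c ⟶ d) (ia : a ⟶ c) (ra : c ⟶ a) (ib : b ⟶ d) (rb : d ⟶ b),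
    ia ≫ ra = 𝟙 a → ib ≫ rb = 𝟙 b → ia ≫ g = f ≫ ib → ra ≫ f = g ≫ rb → P g → P f

/-- A (Quillen) model structure on a finitely bicomplete category `M`. -/
class ModelCategory (M : Type u) [Category.{v} M] [HasFiniteLimits M] [HasFiniteColimits M] :
    Type (max u v) where
  W : MorphismProperty M
  Cof : MorphismProperty M
  Fib : MorphismProperty M
  w_id : ∀ x : M, W (𝟙 x)
  w_comp : ∀ {x y z : M} (f : x ⟶ y) (g : y ⟶ z), W f → W g → W (f ≫ g)
  w_cancel_left : ∀ {x y z : M} (f : x ⟶ y) (g : y ⟶ z), W f → W (f ≫ g) → W g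
  w_cancel_right : ∀ {x y z : M} (f : x ⟶ y) (g : y ⟶ z), W g → W (f ≫ g) → W f
  w_retract : RetractClosed W
  cof_retract : RetractClosed Cof
  fib_retract : RetractClosed Fib
  lift_cof_triv : ∀ {a b x y : M} (i : a ⟶ b) (p : x ⟶ y),
    Cof i → W i → Fib p → HasLiftingProperty i p
  lift_triv_fib : ∀ {a b x y : M} (i : a ⟶ b) (p : x ⟶ y),
    Cof i → Fib p → W p → HasLiftingProperty i p
  factor_cw_f : ∀ {x y : M} (f : x ⟶ y), ∃ (z : M) (i : x ⟶ z) (p : z ⟶ y),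
    Cof i ∧ W i ∧ Fib p ∧ i ≫ p = f
  factor_c_wf : ∀ {x y : M} (f : x ⟶ y), ∃ (z : M) (i : x ⟶ z) (p : z ⟶ y),
    Cof i ∧ Fib p ∧ W p ∧ i ≫ p = f

namespace ModelCategory

variable {M : Type u} [Category.{v} M] [HasFiniteLimits M] [HasFiniteColimits M] [ModelCategory M]

/-- An object is cofibrant if the map from the initial object is a cofibration. -/
def Cofibrant (x : M) : Prop := Cof (M := M) (initial.to x)

/-- An object is fibrant if the map to the terminal object is a fibration. -/
def Fibrant (x : M) : Prop := Fib (M := M) (terminal.from x)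

end ModelCategory
variable {M : Type u} [Category.{v} M]

/-- The latching category of `Δ` at `[n]`: proper monomorphisms `[m] ↪ [n]`. -/
abbrev CosimplicialLatchingCat (n : ℕ) : Type :=
  ObjectProperty.FullSubcategory (fun f : Over (SimplexCategory.mk n) => Mono f.hom ∧ f.left.len < n)

/-- The latching diagram of a cosimplicial object at `[n]`. -/
def cosimplicialLatchingDiagram (X : CosimplicialObject M) (n : ℕ) :
    CosimplicialLatchingCat n ⥤ M :=
  ObjectProperty.ι _ ⋙ Over.forget _ ⋙ X

/-- The canonical cocone on the latching diagram with apex `X.obj [n]`. -/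
def cosimplicialLatchingCocone (X : CosimplicialObject M) (n : ℕ) :
    Cocone (cosimplicialLatchingDiagram X n) where
  pt := X.obj (SimplexCategory.mk n)
  ι :=
    { app := fun f => X.map f.obj.hom
      naturality := by
        intro f g u
        show X.map u.hom.left ≫ X.map g.obj.hom = X.map f.obj.hom ≫ 𝟙 _
        rw [← X.map_comp, Over.w u.hom, Category.comp_id] }

/-- The latching map `Latch_n X → X^n` of a cosimplicial object. -/
noncomputable def cosimplicialLatchingMap (X : CosimplicialObject M) (n : ℕ)
    [HasColimit (cosimplicialLatchingDiagram X n)] :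
    colimit (cosimplicialLatchingDiagram X n) ⟶ X.obj (SimplexCategory.mk n) :=
  colimit.desc _ (cosimplicialLatchingCocone X n)
variable {M : Type u} [Category.{v} M]

/-- The matching category of a cosimplicial object at `[n]`: proper epimorphisms `[n] ↠ [m]`. -/
abbrev CosimplicialMatchingCat (n : ℕ) : Type :=
  ObjectProperty.FullSubcategory (fun f : Under (SimplexCategory.mk n) => Epi f.hom ∧ f.right.len < n)

/-- The matching diagram of a cosimplicial object at `[n]`. -/
def cosimplicialMatchingDiagram (X : CosimplicialObject M) (n : ℕ) :
    CosimplicialMatchingCat n ⥤ M :=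
  ObjectProperty.ι _ ⋙ Under.forget _ ⋙ X

/-- The canonical cone on the matching diagram with apex `X^n`. -/
def cosimplicialMatchingCone (X : CosimplicialObject M) (n : ℕ) :
    Cone (cosimplicialMatchingDiagram X n) where
  pt := X.obj (SimplexCategory.mk n)
  π :=
    { app := fun f => X.map f.obj.hom
      naturality := by
        intro a b u
        show 𝟙 _ ≫ X.map b.obj.hom = X.map a.obj.hom ≫ X.map u.hom.right
        rw [Category.id_comp, ← X.map_comp, Under.w u.hom] }

/-- The matching map `X^n ⟶ Match_n X` of a cosimplicial object. -/
noncomputable def cosimplicialMatchingMap (X : CosimplicialObject M) (n : ℕ)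
    [HasLimit (cosimplicialMatchingDiagram X n)] :
    X.obj (SimplexCategory.mk n) ⟶ limit (cosimplicialMatchingDiagram X n) :=
  limit.lift _ (cosimplicialMatchingCone X n)

/-!
The map is built one level at a time. At level `0` it is forced by the identifications with `x`.
Once it is defined and natural on the levels `≤ n`, its components assemble into a commutative
square from the latching map of `Cyl^•(x)` at `n + 1` to the matching map of `SCyl^•(x)` at
`n + 1`. A lift in this square (a cofibration against an acyclic fibration) is a component at level
`n + 1` compatible with all proper monomorphisms into `⦋n + 1⦌` and all proper epimorphisms out of
it, hence, by epi–mono factorisation in `Δ`, with all maps.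
-/

open Simplicial

lemma ι_cosimplicialLatchingMap {C : Type u} [Category.{v} C] (X : CosimplicialObject C) (n : ℕ)
    [HasColimit (cosimplicialLatchingDiagram X n)] (j : CosimplicialLatchingCat n) :
    colimit.ι _ j ≫ cosimplicialLatchingMap X n = X.map j.obj.hom :=
  colimit.ι_desc _ _

lemma cosimplicialMatchingMap_π {C : Type u} [Category.{v} C] (X : CosimplicialObject C) (n : ℕ)
    [HasLimit (cosimplicialMatchingDiagram X n)] (k : CosimplicialMatchingCat n) :
    cosimplicialMatchingMap X n ≫ limit.π _ k = X.map k.obj.hom :=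
  limit.lift_π _ _

namespace CosimplicialObject

variable {C : Type u} [Category.{v} C] (X S : CosimplicialObject C)

structure TruncatedHom (n : ℕ) where
  app : ∀ a : SimplexCategory, a.len ≤ n → (X.obj a ⟶ S.obj a)
  naturality : ∀ {a b : SimplexCategory} (ha : a.len ≤ n) (hb : b.len ≤ n) (f : a ⟶ b),
    X.map f ≫ app b hb = app a ha ≫ S.map f

variable {X S}

namespace TruncatedHom

def ofZero (g : X.obj ⦋0⦌ ⟶ S.obj ⦋0⦌) : TruncatedHom X S 0 where
  app a ha :=
    X.map (eqToHom (SimplexCategory.ext (Nat.le_zero.mp ha))) ≫ g ≫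
      S.map (eqToHom (SimplexCategory.ext (Nat.le_zero.mp ha)).symm)
  naturality {a b} ha hb f := by
    obtain rfl : a = ⦋0⦌ := SimplexCategory.ext (Nat.le_zero.mp ha)
    obtain rfl : b = ⦋0⦌ := SimplexCategory.ext (Nat.le_zero.mp hb)
    obtain rfl : f = 𝟙 _ := SimplexCategory.isTerminalZero.hom_ext _ _
    simp [X.map_id, S.map_id]

lemma ofZero_app_zero (g : X.obj ⦋0⦌ ⟶ S.obj ⦋0⦌) : (ofZero g).app ⦋0⦌ le_rfl = g := by
  simp [ofZero, X.map_id, S.map_id]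

lemma naturality_of_mono_of_epi {n : ℕ} (φ : ∀ a : SimplexCategory, a.len ≤ n → (X.obj a ⟶ S.obj a))
    (hmono : ∀ {a b : SimplexCategory} (ha : a.len ≤ n) (hb : b.len ≤ n) (i : a ⟶ b) [Mono i],
      X.map i ≫ φ b hb = φ a ha ≫ S.map i)
    (hepi : ∀ {a b : SimplexCategory} (ha : a.len ≤ n) (hb : b.len ≤ n) (e : a ⟶ b) [Epi e],
      X.map e ≫ φ b hb = φ a ha ≫ S.map e)
    {a b : SimplexCategory} (ha : a.len ≤ n) (hb : b.len ≤ n) (f : a ⟶ b) :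
    X.map f ≫ φ b hb = φ a ha ≫ S.map f := by
  have hc : (image f).len ≤ n := (SimplexCategory.len_le_of_mono (image.ι f)).trans hb
  rw [← image.fac f, X.map_comp, S.map_comp, Category.assoc, hmono hc hb, ← Category.assoc,
    hepi ha hc, Category.assoc]

section Extend

variable {n : ℕ} (p : TruncatedHom X S n)

def latchingCocone : Cocone (cosimplicialLatchingDiagram X (n + 1)) where
  pt := S.obj ⦋n + 1⦌
  ι :=
    { app := fun j => p.app j.obj.left (Nat.lt_succ_iff.mp j.property.2) ≫ S.map j.obj.hom
      naturality := fun j j' u => by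
        show X.map u.hom.left ≫ p.app _ _ ≫ S.map j'.obj.hom = (p.app _ _ ≫ S.map j.obj.hom) ≫ 𝟙 _
        rw [Category.comp_id, ← Category.assoc, p.naturality, Category.assoc, ← S.map_comp,
          Over.w u.hom] }

def matchingCone : Cone (cosimplicialMatchingDiagram S (n + 1)) where
  pt := X.obj ⦋n + 1⦌
  π :=
    { app := fun k => X.map k.obj.hom ≫ p.app k.obj.right (Nat.lt_succ_iff.mp k.property.2)
      naturality := fun k k' u => by
        show 𝟙 _ ≫ X.map k'.obj.hom ≫ p.app _ _ = (X.map k.obj.hom ≫ p.app _ _) ≫ S.map u.hom.right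
        rw [Category.id_comp, Category.assoc, ← p.naturality, ← Category.assoc, ← X.map_comp,
          Under.w u.hom] }

def extendApp (l : X.obj ⦋n + 1⦌ ⟶ S.obj ⦋n + 1⦌) (a : SimplexCategory) (ha : a.len ≤ n + 1) :
    X.obj a ⟶ S.obj a :=
  if h : a.len ≤ n then p.app a h
  else
    X.map (eqToHom (SimplexCategory.ext (ha.antisymm (not_le.mp h)))) ≫ l ≫
      S.map (eqToHom (SimplexCategory.ext (ha.antisymm (not_le.mp h))).symm)

lemma extendApp_of_le (l : X.obj ⦋n + 1⦌ ⟶ S.obj ⦋n + 1⦌) {a : SimplexCategory}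
    (ha : a.len ≤ n + 1) (h : a.len ≤ n) : p.extendApp l a ha = p.app a h :=
  dif_pos h

lemma extendApp_top (l : X.obj ⦋n + 1⦌ ⟶ S.obj ⦋n + 1⦌) (ha : ⦋n + 1⦌.len ≤ n + 1) :
    p.extendApp l ⦋n + 1⦌ ha = l := by
  simp [extendApp, X.map_id, S.map_id]

variable [HasColimit (cosimplicialLatchingDiagram X (n + 1))]
  [HasLimit (cosimplicialMatchingDiagram S (n + 1))]

noncomputable def latchingDesc : colimit (cosimplicialLatchingDiagram X (n + 1)) ⟶ S.obj ⦋n + 1⦌ :=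
  colimit.desc _ p.latchingCocone

noncomputable def matchingLift : X.obj ⦋n + 1⦌ ⟶ limit (cosimplicialMatchingDiagram S (n + 1)) :=
  limit.lift _ p.matchingCone

omit [HasLimit (cosimplicialMatchingDiagram S (n + 1))] in
lemma ι_latchingDesc (j : CosimplicialLatchingCat (n + 1)) :
    colimit.ι _ j ≫ p.latchingDesc =
      p.app j.obj.left (Nat.lt_succ_iff.mp j.property.2) ≫ S.map j.obj.hom :=
  colimit.ι_desc _ _

omit [HasColimit (cosimplicialLatchingDiagram X (n + 1))] in
lemma matchingLift_π (k : CosimplicialMatchingCat (n + 1)) :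
    p.matchingLift ≫ limit.π _ k =
      X.map k.obj.hom ≫ p.app k.obj.right (Nat.lt_succ_iff.mp k.property.2) :=
  limit.lift_π _ _

lemma commSq : CommSq p.latchingDesc (cosimplicialLatchingMap X (n + 1))
    (cosimplicialMatchingMap S (n + 1)) p.matchingLift where
  w := colimit.hom_ext fun j => limit.hom_ext fun k => by
    simp only [Category.assoc, cosimplicialMatchingMap_π, matchingLift_π]
    -- `erw`: the source of `colimit.ι _ j` is `X.obj j.obj.left` only after unfolding the diagram.
    erw [reassoc_of% (p.ι_latchingDesc j), reassoc_of% (ι_cosimplicialLatchingMap X (n + 1) j)]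
    have h := p.naturality (Nat.lt_succ_iff.mp j.property.2) (Nat.lt_succ_iff.mp k.property.2)
      (j.obj.hom ≫ k.obj.hom)
    rw [X.map_comp, S.map_comp, Category.assoc] at h
    exact (Category.assoc _ _ _).trans h.symm

variable {p}

lemma map_comp_lift_of_mono (L : p.commSq.LiftStruct) {a : SimplexCategory}
    (i : a ⟶ ⦋n + 1⦌) [Mono i] (ha : a.len ≤ n) : X.map i ≫ L.l = p.app a ha ≫ S.map i := by
  let j : CosimplicialLatchingCat (n + 1) := ⟨Over.mk i, ‹Mono i›, Nat.lt_succ_of_le ha⟩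
  have h := colimit.ι _ j ≫= L.fac_left
  erw [reassoc_of% (ι_cosimplicialLatchingMap X (n + 1) j), p.ι_latchingDesc j] at h
  exact h

lemma lift_comp_map_of_epi (L : p.commSq.LiftStruct) {b : SimplexCategory}
    (e : ⦋n + 1⦌ ⟶ b) [Epi e] (hb : b.len ≤ n) : L.l ≫ S.map e = X.map e ≫ p.app b hb := by
  let k : CosimplicialMatchingCat (n + 1) := ⟨Under.mk e, ‹Epi e›, Nat.lt_succ_of_le hb⟩
  have h := L.fac_right =≫ limit.π _ k
  erw [Category.assoc, cosimplicialMatchingMap_π S (n + 1) k, p.matchingLift_π k] at h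
  exact h

lemma extendApp_naturality_of_mono (L : p.commSq.LiftStruct) {a b : SimplexCategory}
    (ha : a.len ≤ n + 1) (hb : b.len ≤ n + 1) (i : a ⟶ b) [Mono i] :
    X.map i ≫ p.extendApp L.l b hb = p.extendApp L.l a ha ≫ S.map i := by
  by_cases hb' : b.len ≤ n
  · have ha' := (SimplexCategory.len_le_of_mono i).trans hb'
    rw [extendApp_of_le p L.l hb hb', extendApp_of_le p L.l ha ha']
    exact p.naturality ha' hb' i
  obtain rfl : b = ⦋n + 1⦌ := SimplexCategory.ext (hb.antisymm (not_le.mp hb'))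
  by_cases ha' : a.len ≤ n
  · rw [extendApp_top, extendApp_of_le p L.l ha ha']
    exact map_comp_lift_of_mono L i ha'
  obtain rfl : a = ⦋n + 1⦌ := SimplexCategory.ext (ha.antisymm (not_le.mp ha'))
  rw [SimplexCategory.eq_id_of_mono i, X.map_id, S.map_id, Category.id_comp, Category.comp_id]

lemma extendApp_naturality_of_epi (L : p.commSq.LiftStruct) {a b : SimplexCategory}
    (ha : a.len ≤ n + 1) (hb : b.len ≤ n + 1) (e : a ⟶ b) [Epi e] :
    X.map e ≫ p.extendApp L.l b hb = p.extendApp L.l a ha ≫ S.map e := by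
  by_cases ha' : a.len ≤ n
  · have hb' := (SimplexCategory.len_le_of_epi e).trans ha'
    rw [extendApp_of_le p L.l hb hb', extendApp_of_le p L.l ha ha']
    exact p.naturality ha' hb' e
  obtain rfl : a = ⦋n + 1⦌ := SimplexCategory.ext (ha.antisymm (not_le.mp ha'))
  by_cases hb' : b.len ≤ n
  · rw [extendApp_top, extendApp_of_le p L.l hb hb']
    exact (lift_comp_map_of_epi L e hb').symm
  obtain rfl : b = ⦋n + 1⦌ := SimplexCategory.ext (hb.antisymm (not_le.mp hb'))
  rw [SimplexCategory.eq_id_of_epi e, X.map_id, S.map_id, Category.id_comp, Category.comp_id]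

variable (p) in
def extend (L : p.commSq.LiftStruct) : TruncatedHom X S (n + 1) where
  app := p.extendApp L.l
  naturality :=
    naturality_of_mono_of_epi _ (extendApp_naturality_of_mono L) (extendApp_naturality_of_epi L)

lemma extend_app_of_le (L : p.commSq.LiftStruct) {a : SimplexCategory} (h : a.len ≤ n) :
    (p.extend L).app a (h.trans n.le_succ) = p.app a h :=
  extendApp_of_le p L.l (h.trans n.le_succ) h

end Extend

section Glue

variable (p : ∀ n, TruncatedHom X S n)
  (hp : ∀ n a (ha : a.len ≤ n), (p (n + 1)).app a (ha.trans n.le_succ) = (p n).app a ha)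
include hp

lemma app_eq_app_len {m : ℕ} {a : SimplexCategory} (ha : a.len ≤ m) :
    (p m).app a ha = (p a.len).app a le_rfl := by
  induction m, ha using Nat.le_induction with
  | base => rfl
  | succ m hm ih => rw [hp m a hm, ih]

def glue : X ⟶ S where
  app a := (p a.len).app a le_rfl
  naturality a b f := by
    have h := (p (max a.len b.len)).naturality (le_max_left _ _) (le_max_right _ _) f
    rwa [app_eq_app_len p hp (le_max_left a.len b.len),
      app_eq_app_len p hp (le_max_right a.len b.len)] at h

end Glue

end TruncatedHom

variable [∀ n, HasColimit (cosimplicialLatchingDiagram X n)]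
  [∀ n, HasLimit (cosimplicialMatchingDiagram S n)]
  (hlift : ∀ n, HasLiftingProperty (cosimplicialLatchingMap X (n + 1))
    (cosimplicialMatchingMap S (n + 1)))

noncomputable def truncatedHomSeq (g : X.obj ⦋0⦌ ⟶ S.obj ⦋0⦌) : ∀ n, TruncatedHom X S n :=
  Nat.rec (.ofZero g) fun n p => p.extend ((hlift n).sq_hasLift p.commSq).exists_lift.some

include hlift in
theorem exists_hom_app_zero_eq (g : X.obj ⦋0⦌ ⟶ S.obj ⦋0⦌) : ∃ φ : X ⟶ S, φ.app ⦋0⦌ = g :=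
  ⟨TruncatedHom.glue (truncatedHomSeq hlift g) fun _ _ ha => TruncatedHom.extend_app_of_le _ ha,
    TruncatedHom.ofZero_app_zero g⟩

end CosimplicialObject

open ModelCategory

/-- A special cylinder object `SCyl^•(x)` is weakly terminal among cylinder
objects for `x`: any cylinder object `Cyl^•(x)` admits a map of cosimplicial objects
`Cyl^•(x) ⟶ SCyl^•(x)` commuting with the identifications of the `0`-th objects with `x`. -/
theorem special_cylinder_weakly_terminal
    {M : Type u} [Category.{v} M] [HasFiniteLimits M] [HasFiniteColimits M] [ModelCategory M]
    (x : M) (S : CosimplicialObject M)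
    [∀ k : ℕ, HasColimit (cosimplicialLatchingDiagram S k)]
    [∀ k : ℕ, HasLimit (cosimplicialMatchingDiagram S k)]
    -- `S` is a special cylinder object for `x`:
    (eS : S.obj (SimplexCategory.mk 0) ≅ x)
    (hSw : ∀ (n : ℕ) (i : Fin (n + 1)), W (M := M) (S.σ i))
    (hSlatch : ∀ n : ℕ, 1 ≤ n → Cof (M := M) (cosimplicialLatchingMap S n))
    (hSfib : ∀ (n : ℕ) (i : Fin (n + 1)), Fib (M := M) (S.σ i))
    (hSmatch : ∀ n : ℕ, 1 ≤ n →
      W (M := M) (cosimplicialMatchingMap S n) ∧ Fib (M := M) (cosimplicialMatchingMap S n))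
    -- `X` is an arbitrary cylinder object for `x`:
    (X : CosimplicialObject M)
    [∀ k : ℕ, HasColimit (cosimplicialLatchingDiagram X k)]
    (eX : X.obj (SimplexCategory.mk 0) ≅ x)
    (hXw : ∀ (n : ℕ) (i : Fin (n + 1)), W (M := M) (X.σ i))
    (hXlatch : ∀ n : ℕ, 1 ≤ n → Cof (M := M) (cosimplicialLatchingMap X n)) :
    ∃ φ : X ⟶ S, φ.app (SimplexCategory.mk 0) ≫ eS.hom = eX.hom := by
  have hlift (n : ℕ) : HasLiftingProperty (cosimplicialLatchingMap X (n + 1))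
      (cosimplicialMatchingMap S (n + 1)) :=
    lift_triv_fib _ _ (hXlatch _ n.succ_pos) (hSmatch _ n.succ_pos).2 (hSmatch _ n.succ_pos).1
  obtain ⟨φ, hφ⟩ := CosimplicialObject.exists_hom_app_zero_eq hlift (eX.hom ≫ eS.inv)
  exact ⟨φ, by rw [hφ, Category.assoc, eS.inv_hom_id, Category.comp_id]⟩
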